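/- arXiv:1403.5595 — 6 statements merged into one kernel-verified Lean document; each statement's English description precedes it below -/
import Mathlib

section
/- Fix an integer n ≥ 2 and set ζ = 2π/n. Place the bodies at a₀ = 0 ∈ ℂ with mass m₀ = μ ≥ 0 and aⱼ = e^{ijζ} ∈ ℂ with mass mⱼ = 1 for j ∈ {1,…,n}. Set s₁ = (1/4)·∑_{l=1}^{n−1} 1/sin(lπ/n) and ω = μ + s₁. Then the configuration (a₀,…,aₙ) is a relative equilibrium with frequency ω: for every j ∈ {0,1,…,n}, ω·aⱼ = ∑_{i=0, i≠j}^{n} mᵢ·(aⱼ − aᵢ)/|aⱼ − aᵢ|³. (This is Maxwell's Saturn ring configuration.) -/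
open Finset ComplexConjugate

/-!
Put the ring bodies at the values of the standard additive character `e` of `ZMod n`.
Since `e (k + x) = e k * e x` with `‖e k‖ = 1`, the force on the ring body `e k` is `e k` times
the force `S = ∑ₓ (1 - e x) / |1 - e x|³` on the body at `1`, plus `μ e k` from the centre.
`S` is real because `x ↦ -x` conjugates its terms, and the real part of the term at `l` is
`1 / (4 sin (lπ/n))`. The force on the centre is minus the sum of the `n`-th roots of unity,
which vanishes.
-/

/-- `z / |z|³`, with the junk value `0` at `z = 0`, which makes the self-interaction term vanish. -/
noncomputable def newtonKernel (z : ℂ) : ℂ := z / ((‖z‖ : ℝ) : ℂ) ^ 3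

lemma newtonKernel_def (z : ℂ) : newtonKernel z = z / ((‖z‖ : ℝ) : ℂ) ^ 3 := rfl

@[simp] lemma newtonKernel_zero : newtonKernel 0 = 0 := by simp [newtonKernel]

lemma newtonKernel_of_norm_eq_one {u : ℂ} (hu : ‖u‖ = 1) : newtonKernel u = u := by
  simp [newtonKernel, hu]

lemma newtonKernel_neg (z : ℂ) : newtonKernel (-z) = -newtonKernel z := by
  simp [newtonKernel, neg_div]

lemma newtonKernel_mul_of_norm_eq_one {u : ℂ} (hu : ‖u‖ = 1) (z : ℂ) :
    newtonKernel (u * z) = u * newtonKernel z := by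
  simp [newtonKernel, hu, mul_div_assoc]

lemma conj_newtonKernel (z : ℂ) : conj (newtonKernel z) = newtonKernel (conj z) := by
  simp [newtonKernel, map_div₀]

lemma re_newtonKernel (z : ℂ) : (newtonKernel z).re = z.re / ‖z‖ ^ 3 := by
  rw [newtonKernel, ← Complex.ofReal_pow, Complex.div_ofReal_re]

lemma re_newtonKernel_one_sub_exp {x : ℝ} (hx : 0 < Real.sin (x / 2)) :
    (newtonKernel (1 - Complex.exp (Complex.I * x))).re = 1 / (4 * Real.sin (x / 2)) := by
  have hnorm : ‖1 - Complex.exp (Complex.I * x)‖ = 2 * Real.sin (x / 2) := by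
    rw [norm_sub_rev, Complex.norm_exp_I_mul_ofReal_sub_one, Real.norm_of_nonneg (by positivity)]
  have hre : (1 - Complex.exp (Complex.I * x)).re = 2 * Real.sin (x / 2) ^ 2 := by
    have hcos : Real.cos x = Real.cos (2 * (x / 2)) := by ring_nf
    rw [mul_comm, Complex.sub_re, Complex.one_re, Complex.exp_ofReal_mul_I_re, hcos,
      Real.cos_two_mul', Real.cos_sq']
    ring
  rw [re_newtonKernel, hnorm, hre]
  field_simp
  ring

namespace AddChar

variable {G : Type*} [AddCommGroup G] [Fintype G] (ψ : AddChar G ℂ)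

lemma sum_newtonKernel_sub (k : G) :
    ∑ x, newtonKernel (ψ k - ψ x) = ψ k * ∑ x, newtonKernel (1 - ψ x) := by
  rw [mul_sum]
  refine (Fintype.sum_equiv (Equiv.addLeft k) _ _ fun x => ?_).symm
  rw [Equiv.coe_addLeft, map_add_eq_mul, ← newtonKernel_mul_of_norm_eq_one (ψ.norm_apply k),
    mul_sub, mul_one]

lemma ofReal_re_sum_newtonKernel_one_sub :
    ((∑ x, newtonKernel (1 - ψ x)).re : ℂ) = ∑ x, newtonKernel (1 - ψ x) := by
  rw [← Complex.conj_eq_iff_re, map_sum]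
  refine Fintype.sum_equiv (Equiv.neg G) _ _ fun x => ?_
  rw [conj_newtonKernel, map_sub, map_one, Equiv.neg_apply, ψ.map_neg_eq_conj]

end AddChar

lemma ZMod.sum_fin_natCast {M : Type*} [AddCommMonoid M] {n : ℕ} [NeZero n] (g : ZMod n → M) :
    ∑ i : Fin n, g (i : ℕ) = ∑ x, g x := by
  refine Fintype.sum_bijective (fun i : Fin n => ((i : ℕ) : ZMod n))
    ⟨fun i i' h => Fin.ext ?_, fun x => ⟨⟨x.val, x.val_lt⟩, ZMod.natCast_zmod_val x⟩⟩ _ _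
    fun _ => rfl
  simpa [ZMod.val_natCast, Nat.mod_eq_of_lt] using congrArg ZMod.val h

lemma ZMod.stdAddChar_natCast {n : ℕ} [NeZero n] (l : ℕ) :
    ZMod.stdAddChar (l : ZMod n) = Complex.exp (Complex.I * ↑(2 * Real.pi * l / n)) := by
  rw [ZMod.stdAddChar_apply, ZMod.toCircle_natCast]
  push_cast
  ring_nf

lemma ZMod.sum_newtonKernel_one_sub_stdAddChar (n : ℕ) [NeZero n] :
    ∑ x : ZMod n, newtonKernel (1 - ZMod.stdAddChar x) =
      (((1 / 4) * ∑ l ∈ Ico 1 n, 1 / Real.sin (l * Real.pi / n) : ℝ) : ℂ) := by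
  rw [← AddChar.ofReal_re_sum_newtonKernel_one_sub, Complex.re_sum, ← ZMod.sum_fin_natCast,
    Fin.sum_univ_eq_sum_range (fun l => (newtonKernel (1 - ZMod.stdAddChar (l : ZMod n))).re),
    range_eq_Ico, sum_eq_sum_Ico_succ_bot (NeZero.pos n), mul_sum]
  simp only [Nat.cast_zero, AddChar.map_zero_eq_one, sub_self, newtonKernel_zero, Complex.zero_re,
    zero_add]
  congr 1
  refine sum_congr rfl fun l hl => ?_
  obtain ⟨hl1, hln⟩ := mem_Ico.mp hl
  have hsin : 0 < Real.sin (2 * Real.pi * l / n / 2) := by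
    have hn : (0 : ℝ) < n := by exact_mod_cast NeZero.pos n
    have hl0 : (0 : ℝ) < l := by exact_mod_cast hl1
    have hln' : (l : ℝ) < n := by exact_mod_cast hln
    apply Real.sin_pos_of_pos_of_lt_pi
    · positivity
    · rw [div_div, div_lt_iff₀ (by positivity)]
      nlinarith [Real.pi_pos]
  rw [ZMod.stdAddChar_natCast, re_newtonKernel_one_sub_exp hsin]
  field_simp

lemma ZMod.sum_stdAddChar_eq_zero (n : ℕ) [Fact (1 < n)] :
    ∑ x : ZMod n, ZMod.stdAddChar x = 0 :=
  AddChar.sum_eq_zero_iff_ne_zero.mpr fun h => one_ne_zero <|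
    ZMod.injective_stdAddChar (N := n) <| by simp [h]

theorem maxwell_ring_relative_equilibrium_general
    (n : ℕ) (hn : 2 ≤ n) (μ : ℝ)
    (ζ : ℝ) (hζ : ζ = 2 * Real.pi / n)
    (a : Fin (n + 1) → ℂ) (ha0 : a 0 = 0)
    (ha : ∀ j : Fin (n + 1), j ≠ 0 →
      a j = Complex.exp (Complex.I * ((j : ℕ) : ℂ) * (ζ : ℂ)))
    (m : Fin (n + 1) → ℝ) (hm0 : m 0 = μ)
    (hm : ∀ j : Fin (n + 1), j ≠ 0 → m j = 1)
    (s₁ : ℝ)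
    (hs₁ : s₁ = (1 / 4) * ∑ l ∈ Finset.Ico 1 n, 1 / Real.sin (l * Real.pi / n))
    (ω : ℝ) (hω : ω = μ + s₁) :
    ∀ j : Fin (n + 1), (ω : ℂ) * a j =
      ∑ i ∈ Finset.univ.erase j,
        ((m i : ℂ) * (a j - a i)) / ((‖a j - a i‖ : ℝ) : ℂ) ^ 3 := by
  intro j
  have : Fact (1 < n) := ⟨hn⟩
  set e : AddChar (ZMod n) ℂ := ZMod.stdAddChar
  have ha_succ : ∀ i : Fin n, a i.succ = e ((i : ℕ) + 1) := by
    intro i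
    rw [ha _ (Fin.succ_ne_zero i), ← Nat.cast_succ, ZMod.stdAddChar_natCast, hζ, Fin.val_succ]
    push_cast
    ring_nf
  have hring (z : ℂ) :
      ∑ i : Fin n, newtonKernel (z - e ((i : ℕ) + 1)) = ∑ x, newtonKernel (z - e x) := by
    rw [ZMod.sum_fin_natCast fun y => newtonKernel (z - e (y + 1))]
    exact Fintype.sum_equiv (Equiv.addRight 1) _ _ fun _ => rfl
  rw [sum_erase _ (by simp), Fin.sum_univ_succ]
  simp only [mul_div_assoc, ← newtonKernel_def, ha0, hm0, hm _ (Fin.succ_ne_zero _), ha_succ,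
    Complex.ofReal_one, one_mul]
  cases j using Fin.cases with
  | zero =>
    rw [ha0, hring, sub_self, newtonKernel_zero, mul_zero, mul_zero, zero_add]
    simp only [zero_sub, newtonKernel_neg, newtonKernel_of_norm_eq_one (e.norm_apply _),
      sum_neg_distrib, e, ZMod.sum_stdAddChar_eq_zero, neg_zero]
  | succ k =>
    rw [ha_succ, hring, e.sum_newtonKernel_sub, ZMod.sum_newtonKernel_one_sub_stdAddChar, ← hs₁,
      sub_zero, newtonKernel_of_norm_eq_one (e.norm_apply _), hω]
    push_cast
    ring

/-- **Maxwell's Saturn ring.** For `n ≥ 2`, the configuration of a central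
body of mass `μ ≥ 0` at the origin and `n` bodies of mass `1` at the vertices
`aⱼ = e^{ijζ}` (`ζ = 2π/n`) of a regular `n`-gon is a relative equilibrium with frequency
`ω = μ + s₁`, where `s₁ = (1/4) ∑_{l=1}^{n-1} 1/sin(lπ/n)`:  for every `j`,
`ω·aⱼ = ∑_{i ≠ j} mᵢ (aⱼ - aᵢ)/|aⱼ - aᵢ|³`. -/
theorem maxwell_ring_relative_equilibrium
    (n : ℕ) (hn : 2 ≤ n) (μ : ℝ) (hμ : 0 ≤ μ)
    (ζ : ℝ) (hζ : ζ = 2 * Real.pi / n)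
    (a : Fin (n + 1) → ℂ) (ha0 : a 0 = 0)
    (ha : ∀ j : Fin (n + 1), j ≠ 0 →
      a j = Complex.exp (Complex.I * ((j : ℕ) : ℂ) * (ζ : ℂ)))
    (m : Fin (n + 1) → ℝ) (hm0 : m 0 = μ)
    (hm : ∀ j : Fin (n + 1), j ≠ 0 → m j = 1)
    (s₁ : ℝ)
    (hs₁ : s₁ = (1 / 4) * ∑ l ∈ Finset.Ico 1 n, 1 / Real.sin (l * Real.pi / n))
    (ω : ℝ) (hω : ω = μ + s₁) :
    ∀ j : Fin (n + 1), (ω : ℂ) * a j =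
      ∑ i ∈ Finset.univ.erase j,
        ((m i : ℂ) * (a j - a i)) / ((‖a j - a i‖ : ℝ) : ℂ) ^ 3 :=
  maxwell_ring_relative_equilibrium_general n hn μ ζ hζ a ha0 ha m hm0 hm s₁ hs₁ ω hω
end

section
/- Fix an integer n ≥ 2 and set ζ = 2π/n. Then the complex number ∑_{j=1}^{n−1} (1 − e^{ijζ})/|1 − e^{ijζ}|³ is real and equals (1/4)·∑_{j=1}^{n−1} 1/sin(jπ/n). -/
/-!
With `φ = jπ/n` one has `1 - e^{2iφ} = -2i sin φ e^{iφ}` and `sin φ > 0`, so the `j`-th term is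
`(sin φ - i cos φ) / (4 sin² φ)`. The imaginary parts cancel in pairs under `j ↦ n - j`, since
`φ ↦ π - φ` fixes `sin φ` and negates `cos φ`.
-/

open Finset Complex

lemma one_sub_exp_two_mul_I (φ : ℝ) :
    1 - exp (2 * φ * I) = -2 * I * Real.sin φ * exp (φ * I) := by
  have h : exp (2 * φ * I) = exp (φ * I) ^ 2 := by rw [← exp_nat_mul]; ring_nf
  rw [h, exp_mul_I, ofReal_sin]
  linear_combination (-1 : ℂ) * sin_sq_add_cos_sq (φ : ℂ) + (sin φ) ^ 2 * I_sq

lemma norm_one_sub_exp_two_mul_I (φ : ℝ) : ‖1 - exp (2 * φ * I)‖ = 2 * |Real.sin φ| := by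
  rw [one_sub_exp_two_mul_I, norm_mul, norm_exp_ofReal_mul_I, norm_mul, norm_real, norm_mul, norm_I]
  simp

lemma one_sub_exp_two_mul_I_div_norm_cube {φ : ℝ} (hφ : 0 < Real.sin φ) :
    (1 - exp (2 * φ * I)) / (‖1 - exp (2 * φ * I)‖ : ℂ) ^ 3
      = (1 / (4 * Real.sin φ) : ℝ) - I * (Real.cos φ / (4 * Real.sin φ ^ 2) : ℝ) := by
  rw [norm_one_sub_exp_two_mul_I, abs_of_pos hφ, one_sub_exp_two_mul_I, exp_mul_I]
  push_cast
  have hsin : sin (φ : ℂ) ≠ 0 := by rw [← ofReal_sin]; exact ofReal_ne_zero.mpr hφ.ne'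
  field_simp
  linear_combination (-4 * sin (φ : ℂ)) * I_sq

lemma sum_Ico_one_reflect {M : Type*} [AddCommMonoid M] (f : ℕ → M) (n : ℕ) :
    ∑ j ∈ Ico 1 n, f (n - j) = ∑ j ∈ Ico 1 n, f j := by
  rw [sum_Ico_reflect f 1 n.le_succ]
  simp

lemma sum_Ico_eq_zero_of_pi_sub {g : ℝ → ℝ} (hg : ∀ x, g (Real.pi - x) = -g x) (n : ℕ) :
    ∑ j ∈ Ico 1 n, g (j * Real.pi / n) = 0 := by
  have h : ∑ j ∈ Ico 1 n, g ((n - j : ℕ) * Real.pi / n) = -∑ j ∈ Ico 1 n, g (j * Real.pi / n) := by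
    rw [← sum_neg_distrib]
    refine sum_congr rfl fun j hj => ?_
    have hn : (n : ℝ) ≠ 0 := Nat.cast_ne_zero.mpr (by grind)
    rw [Nat.cast_sub (mem_Ico.mp hj).2.le, ← hg]
    congr 1
    field_simp
  rw [sum_Ico_one_reflect (fun j => g (j * Real.pi / n))] at h
  linarith

lemma sin_mul_pi_div_pos {j n : ℕ} (hj : j ∈ Ico 1 n) : 0 < Real.sin (j * Real.pi / n) := by
  obtain ⟨hj1, hjn⟩ := mem_Ico.mp hj
  have hj0 : (0 : ℝ) < j := by exact_mod_cast hj1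
  have hjn' : (j : ℝ) < n := by exact_mod_cast hjn
  apply Real.sin_pos_of_pos_of_lt_pi (div_pos (mul_pos hj0 Real.pi_pos) (hj0.trans hjn'))
  rw [div_lt_iff₀ (hj0.trans hjn'), mul_comm]
  gcongr

theorem ring_sum_is_real_general
    (n : ℕ) (ζ : ℝ) (hζ : ζ = 2 * Real.pi / n) :
    ∑ j ∈ Finset.Ico 1 n,
        (1 - Complex.exp (Complex.I * (j : ℂ) * (ζ : ℂ))) /
          ((‖1 - Complex.exp (Complex.I * (j : ℂ) * (ζ : ℂ))‖ : ℝ) : ℂ) ^ 3 =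
      (((1 / 4) * ∑ j ∈ Finset.Ico 1 n, 1 / Real.sin (j * Real.pi / n) : ℝ) : ℂ) := by
  have hangle (j : ℕ) : I * j * ζ = 2 * (j * Real.pi / n : ℝ) * I := by
    rw [hζ]; push_cast; ring
  simp_rw [hangle]
  rw [sum_congr rfl fun j hj => one_sub_exp_two_mul_I_div_norm_cube (sin_mul_pi_div_pos hj),
    sum_sub_distrib, ← mul_sum, ← ofReal_sum, ← ofReal_sum,
    sum_Ico_eq_zero_of_pi_sub (g := fun x => Real.cos x / (4 * Real.sin x ^ 2))
      (fun x => by simp [Real.cos_pi_sub, Real.sin_pi_sub, neg_div]) n,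
    ofReal_zero, mul_zero, sub_zero, mul_sum]
  congr 2 with j
  ring

/-- For `n ≥ 2` and `ζ = 2π/n`, the complex number
`∑_{j=1}^{n-1} (1 - e^{ijζ})/|1 - e^{ijζ}|³` is real and equals
`(1/4) ∑_{j=1}^{n-1} 1/sin(jπ/n)`. -/
theorem ring_sum_is_real
    (n : ℕ) (hn : 2 ≤ n) (ζ : ℝ) (hζ : ζ = 2 * Real.pi / n) :
    ∑ j ∈ Finset.Ico 1 n,
        (1 - Complex.exp (Complex.I * (j : ℂ) * (ζ : ℂ))) /
          ((‖1 - Complex.exp (Complex.I * (j : ℂ) * (ζ : ℂ))‖ : ℝ) : ℂ) ^ 3 =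
      (((1 / 4) * ∑ j ∈ Finset.Ico 1 n, 1 / Real.sin (j * Real.pi / n) : ℝ) : ℂ) :=
  ring_sum_is_real_general n ζ hζ
end

section
/- Fix n ≥ 1, masses m₀,…,mₙ > 0, ω > 0 and ν > 0. Let xⱼ = (uⱼ, zⱼ) : ℝ → ℂ × ℝ, j = 0,…,n, be C², 2π-periodic paths with xⱼ(t) ≠ xᵢ(t) for all t and all i ≠ j. Define the n-body bifurcation map componentwise by fⱼ(t) = ( −ν²·mⱼ·üⱼ − 2ν·mⱼ·√ω·i·u̇ⱼ + ω·mⱼ·uⱼ − ∑_{i≠j} mᵢ·mⱼ·(uⱼ − uᵢ)/r_{ij}³ , −ν²·mⱼ·z̈ⱼ − ∑_{i≠j} mᵢ·mⱼ·(zⱼ − zᵢ)/r_{ij}³ ), where r_{ij}(t) = (|uⱼ(t) − uᵢ(t)|² + (zⱼ(t) − zᵢ(t))²)^{1/2}. Then f is orthogonal to the infinitesimal generator of rotations: ∑_{j=0}^{n} ∫₀^{2π} Re( (−ν²·mⱼ·üⱼ(t) − 2ν·mⱼ·√ω·i·u̇ⱼ(t) + ω·mⱼ·uⱼ(t) − ∑_{i≠j}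 mᵢ·mⱼ·(uⱼ(t) − uᵢ(t))/r_{ij}(t)³) · conj(−i·uⱼ(t)) ) dt = 0. -/
open Finset ComplexConjugate Complex

/-!
Pairing with `-i·uⱼ`, the gravitational forces drop out of the sum over `j`: the forces between
bodies `i` and `j` are central, equal and opposite, so their torques cancel. What is left is an
exact derivative, namely of `∑ⱼ (ν² mⱼ Im(u̇ⱼ ūⱼ) + ν √ω mⱼ |uⱼ|²)`, because `u̇ⱼ conj u̇ⱼ` is real
and the centrifugal term `ω mⱼ uⱼ` is orthogonal to `-i·uⱼ`. A derivative of a `2π`-periodic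
function integrates to zero over a period.
-/

lemma Finset.sum_sum_erase_eq_zero_of_antisymm {ι M : Type*} [Fintype ι] [DecidableEq ι]
    [AddCommGroup M] (F : ι → ι → M) (hF : ∀ i j, F i j = -F j i) :
    ∑ j, ∑ i ∈ univ.erase j, F i j = 0 := by
  rw [sum_sigma']
  refine sum_involution (fun p _ => ⟨p.2, p.1⟩) (fun p _ => by simp [hF p.2 p.1]) ?_ ?_
    fun _ _ => rfl
  · rintro ⟨j, i⟩ hp - h
    exact (mem_erase.mp (mem_sigma.mp hp).2).1 (Sigma.mk.inj_iff.mp h).1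
  · rintro ⟨j, i⟩ hp
    simpa [eq_comm] using hp

lemma re_central_force_mul_conj_antisymm (a b ρ : ℝ) (p q : ℂ) :
    (((a : ℂ) * b * (p - q)) / (ρ : ℂ) ^ 3 * conj (-(I * p))).re
      = -((((b : ℂ) * a * (q - p)) / (ρ : ℂ) ^ 3) * conj (-(I * q))).re := by
  simp only [← ofReal_pow, div_ofReal, mul_re, mul_im, sub_re, sub_im, conj_re, conj_im,
    ofReal_re, ofReal_im, I_re, I_im, neg_re, neg_im]
  ring

lemma re_rotating_frame_mul_conj (ν μ ω s : ℝ) (a b c : ℂ) :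
    ((-(ν : ℂ) ^ 2 * μ * c - 2 * ν * μ * ((s : ℂ) * (I * b)) + ω * μ * a) * conj (-(I * a))).re
      = ν ^ 2 * μ * (c * conj a).im + ν * s * μ * (2 * (b * conj a).re) := by
  simp only [mul_re, mul_im, sub_re, sub_im, add_re, add_im, conj_re, conj_im, ← ofReal_pow,
    ofReal_re, ofReal_im, I_re, I_im, neg_re, neg_im, re_ofNat, im_ofNat]
  ring

lemma Function.Periodic.deriv {E : Type*} [NormedAddCommGroup E] [NormedSpace ℝ E] {f : ℝ → E}
    {c : ℝ} (h : Function.Periodic f c) :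
    Function.Periodic (deriv f) c := by
  intro t
  rw [← deriv_comp_add_const, funext h]

lemma hasDerivAt_im_deriv_mul_conj {u : ℝ → ℂ} {t : ℝ} (hu : DifferentiableAt ℝ u t)
    (hu' : DifferentiableAt ℝ (deriv u) t) :
    HasDerivAt (fun t => (deriv u t * conj (u t)).im) ((deriv (deriv u) t * conj (u t)).im) t := by
  have h := imCLM.hasFDerivAt.comp_hasDerivAt t (hu'.hasDerivAt.mul hu.hasDerivAt.star)
  simp only [star_def, imCLM_apply, mul_conj, add_im, ofReal_im, add_zero] at h
  exact h

lemma sq_norm_sub_add_sq_sub_pos {E : Type*} [NormedAddCommGroup E] {a b : E} {x y : ℝ}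
    (h : (a, x) ≠ (b, y)) : 0 < ‖a - b‖ ^ 2 + (x - y) ^ 2 := by
  by_contra! hle
  refine h (Prod.ext ?_ ?_)
  · have : ‖a - b‖ = 0 := by nlinarith [sq_nonneg (x - y), norm_nonneg (a - b)]
    exact sub_eq_zero.mp (norm_eq_zero.mp this)
  · have : x - y = 0 := by nlinarith [sq_nonneg (x - y), sq_nonneg ‖a - b‖]
    exact sub_eq_zero.mp this

lemma intervalIntegral_eq_zero_of_hasDerivAt_of_periodic {E : Type*} [NormedAddCommGroup E]
    [NormedSpace ℝ E] [CompleteSpace E] {G g : ℝ → E} {T : ℝ} (hG : ∀ t, HasDerivAt G (g t) t)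
    (hg : IntervalIntegrable g MeasureTheory.volume 0 T) (hper : Function.Periodic G T) :
    ∫ t in (0 : ℝ)..T, g t = 0 := by
  rw [intervalIntegral.integral_eq_sub_of_hasDerivAt (fun t _ => hG t) hg, ← zero_add T, hper 0,
    sub_self]

section NBody

variable {ι : Type*} [Fintype ι] [DecidableEq ι]

/-- The `ℂ`-component `fⱼ` of the bifurcation map, with `r i j` in the role of `r_{ij}`. -/
noncomputable def nbodyMap (m : ι → ℝ) (ω ν : ℝ) (u : ι → ℝ → ℂ) (r : ι → ι → ℝ → ℝ) (j : ι)
    (t : ℝ) : ℂ :=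
  -(ν : ℂ) ^ 2 * (m j : ℂ) * deriv (deriv (u j)) t
    - 2 * (ν : ℂ) * (m j : ℂ) * ((√ω : ℂ) * (I * deriv (u j) t))
    + (ω : ℂ) * (m j : ℂ) * u j t
    - ∑ i ∈ univ.erase j, ((m i : ℂ) * (m j : ℂ) * (u j t - u i t)) / ((r i j t : ℂ)) ^ 3

variable {m : ι → ℝ} {ω ν : ℝ} {u : ι → ℝ → ℂ} {r : ι → ι → ℝ → ℝ}

lemma sum_re_nbodyMap_mul_conj {t : ℝ} (hr : ∀ i j, r i j t = r j i t) :
    ∑ j, (nbodyMap m ω ν u r j t * conj (-(I * u j t))).re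
      = ∑ j, (ν ^ 2 * m j * (deriv (deriv (u j)) t * conj (u j t)).im
          + ν * √ω * m j * (2 * (deriv (u j) t * conj (u j t)).re)) := by
  have torque : ∑ j, ∑ i ∈ univ.erase j,
      (((m i : ℂ) * m j * (u j t - u i t)) / (r i j t : ℂ) ^ 3 * conj (-(I * u j t))).re = 0 :=
    sum_sum_erase_eq_zero_of_antisymm _ fun i j => by
      rw [hr i j]; exact re_central_force_mul_conj_antisymm _ _ _ _ _
  simp only [nbodyMap, sub_mul _ (∑ i ∈ _, _), sum_mul, sub_re, re_sum, sum_sub_distrib, torque,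
    sub_zero, re_rotating_frame_mul_conj]

lemma continuous_nbodyMap (hu : ∀ j, ContDiff ℝ 2 (u j)) (hr : ∀ i j, Continuous (r i j))
    (hr0 : ∀ i j t, i ≠ j → r i j t ≠ 0) (j : ι) : Continuous (nbodyMap m ω ν u r j) := by
  have hu₀ (j : ι) : Continuous (u j) := (hu j).continuous
  have hu₁ (j : ι) : Continuous (deriv (u j)) := (hu j).continuous_deriv one_le_two
  have hu₂ (j : ι) : Continuous (deriv (deriv (u j))) :=
    ((hu j).deriv' (n := 1)).continuous_deriv le_rfl
  unfold nbodyMap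
  refine ((((continuous_const.mul (hu₂ j)).sub ?_).add (continuous_const.mul (hu₀ j))).sub ?_)
  · fun_prop
  · refine continuous_finsetSum _ fun i hi => ?_
    refine (continuous_const.mul ((hu₀ j).sub (hu₀ i))).div (by fun_prop) fun t => ?_
    exact pow_ne_zero _ (ofReal_ne_zero.mpr (hr0 i j t (ne_of_mem_erase hi)))

lemma hasDerivAt_sum_re_nbodyMap_mul_conj {t : ℝ} (hu : ∀ j, DifferentiableAt ℝ (u j) t)
    (hu' : ∀ j, DifferentiableAt ℝ (deriv (u j)) t) (hr : ∀ i j, r i j t = r j i t) :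
    HasDerivAt (fun t => ∑ j, (ν ^ 2 * m j * (deriv (u j) t * conj (u j t)).im
        + ν * √ω * m j * ‖u j t‖ ^ 2))
      (∑ j, (nbodyMap m ω ν u r j t * conj (-(I * u j t))).re) t := by
  rw [sum_re_nbodyMap_mul_conj hr]
  refine HasDerivAt.fun_sum fun j _ => ?_
  have hnorm := (hu j).hasDerivAt.norm_sq
  rw [Complex.inner] at hnorm
  exact ((hasDerivAt_im_deriv_mul_conj (hu j) (hu' j)).const_mul _).add (hnorm.const_mul _)

end NBody

theorem nbody_map_orthogonal_to_rotations_general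
    (n : ℕ) (m : Fin (n + 1) → ℝ)
    (ω ν : ℝ)
    (u : Fin (n + 1) → ℝ → ℂ) (z : Fin (n + 1) → ℝ → ℝ)
    (hu : ∀ j, ContDiff ℝ 2 (u j)) (hz : ∀ j, ContDiff ℝ 2 (z j))
    (hup : ∀ j, Function.Periodic (u j) (2 * Real.pi))
    (hcol : ∀ t : ℝ, ∀ i j : Fin (n + 1), i ≠ j → (u j t, z j t) ≠ (u i t, z i t))
    (r : Fin (n + 1) → Fin (n + 1) → ℝ → ℝ)
    (hr : ∀ i j t, r i j t =
      Real.sqrt (‖u j t - u i t‖ ^ 2 + (z j t - z i t) ^ 2)) :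
    ∑ j : Fin (n + 1), ∫ t in (0 : ℝ)..(2 * Real.pi),
        ((-(ν : ℂ) ^ 2 * (m j : ℂ) * deriv (deriv (u j)) t
            - 2 * (ν : ℂ) * (m j : ℂ) * ((Real.sqrt ω : ℂ) * (Complex.I * deriv (u j) t))
            + (ω : ℂ) * (m j : ℂ) * u j t
            - ∑ i ∈ Finset.univ.erase j,
                ((m i : ℂ) * (m j : ℂ) * (u j t - u i t)) / ((r i j t : ℂ)) ^ 3)
          * (starRingEnd ℂ) (-(Complex.I * u j t))).re = 0 := by
  have hu₀ (j) : Continuous (u j) := (hu j).continuous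
  have hz₀ (j) : Continuous (z j) := (hz j).continuous
  have hr_symm (i j t) : r i j t = r j i t := by
    rw [hr, hr, norm_sub_rev, ← neg_sub (z i t), neg_sq]
  have hr_ne (i j t) (hij : i ≠ j) : r i j t ≠ 0 := by
    rw [hr]
    exact (Real.sqrt_pos.mpr (sq_norm_sub_add_sq_sub_pos (hcol t i j hij))).ne'
  have hr_cont (i j) : Continuous (r i j) := by
    rw [funext (hr i j)]
    fun_prop
  have hper : Function.Periodic (fun t => ∑ j, (ν ^ 2 * m j * (deriv (u j) t * conj (u j t)).im
      + ν * √ω * m j * ‖u j t‖ ^ 2)) (2 * Real.pi) := fun t => by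
    simp only [hup _ t, (hup _).deriv t]
  change ∑ j, ∫ t in (0 : ℝ)..(2 * Real.pi),
    (nbodyMap m ω ν u r j t * conj (-(I * u j t))).re = 0
  have hcont (j) : Continuous fun t => (nbodyMap m ω ν u r j t * conj (-(I * u j t))).re :=
    continuous_re.comp ((continuous_nbodyMap hu hr_cont hr_ne j).mul (by fun_prop))
  rw [← intervalIntegral.integral_finsetSum fun j _ => (hcont j).intervalIntegrable _ _]
  refine intervalIntegral_eq_zero_of_hasDerivAt_of_periodic (fun t => ?_)
    ((continuous_finsetSum _ fun j _ => hcont j).intervalIntegrable _ _) hper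
  exact hasDerivAt_sum_re_nbodyMap_mul_conj (fun j => ((hu j).differentiable two_ne_zero) t)
    (fun j => ((hu j).deriv' (n := 1)).differentiable one_ne_zero t) (hr_symm · · t)

/-- The `n`-body bifurcation map in rotating coordinates is orthogonal
(in `L²`) to the infinitesimal generator `A₁ xⱼ = (-i·uⱼ, 0)` of the `SO(2)`-action
rotating the horizontal plane: for any `C²`, `2π`-periodic, collision-free paths the
displayed sum of integrals vanishes (conservation of angular momentum). -/
theorem nbody_map_orthogonal_to_rotations
    (n : ℕ) (hn : 1 ≤ n) (m : Fin (n + 1) → ℝ) (hm : ∀ j, 0 < m j)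
    (ω ν : ℝ) (hω : 0 < ω) (hν : 0 < ν)
    (u : Fin (n + 1) → ℝ → ℂ) (z : Fin (n + 1) → ℝ → ℝ)
    (hu : ∀ j, ContDiff ℝ 2 (u j)) (hz : ∀ j, ContDiff ℝ 2 (z j))
    (hup : ∀ j, Function.Periodic (u j) (2 * Real.pi))
    (hzp : ∀ j, Function.Periodic (z j) (2 * Real.pi))
    (hcol : ∀ t : ℝ, ∀ i j : Fin (n + 1), i ≠ j → (u j t, z j t) ≠ (u i t, z i t))
    (r : Fin (n + 1) → Fin (n + 1) → ℝ → ℝ)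
    (hr : ∀ i j t, r i j t =
      Real.sqrt (‖u j t - u i t‖ ^ 2 + (z j t - z i t) ^ 2)) :
    ∑ j : Fin (n + 1), ∫ t in (0 : ℝ)..(2 * Real.pi),
        ((-(ν : ℂ) ^ 2 * (m j : ℂ) * deriv (deriv (u j)) t
            - 2 * (ν : ℂ) * (m j : ℂ) * ((Real.sqrt ω : ℂ) * (Complex.I * deriv (u j) t))
            + (ω : ℂ) * (m j : ℂ) * u j t
            - ∑ i ∈ Finset.univ.erase j,
                ((m i : ℂ) * (m j : ℂ) * (u j t - u i t)) / ((r i j t : ℂ)) ^ 3)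
          * (starRingEnd ℂ) (-(Complex.I * u j t))).re = 0 :=
  nbody_map_orthogonal_to_rotations_general n m ω ν u z hu hz hup hcol r hr
end

section
/- Fix n ≥ 1 and masses m₀,…,mₙ > 0. Let x₀,…,xₙ ∈ ℂ × ℝ, with xⱼ = (uⱼ, zⱼ), be pairwise distinct points such that for every j ∈ {0,…,n}: ∑_{i≠j} mᵢ·mⱼ·(zⱼ − zᵢ)/‖xⱼ − xᵢ‖³ = 0, where ‖xⱼ − xᵢ‖ = (|uⱼ − uᵢ|² + (zⱼ − zᵢ)²)^{1/2}. Then z₀ = z₁ = … = zₙ. In particular, every relative equilibrium of the (n+1)-body problem is planar. -/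
/-!
Look at a body of maximal height `z j`. Every other body pulls it downwards or horizontally,
so each term of the `j`-th vertical equation is nonnegative, and it is zero only when the two
bodies are at the same height. Since the terms sum to zero, all bodies are at height `z j`.
-/

open Finset

theorem eq_of_forall_le_of_sum_eq_zero {ι : Type*} (s : Finset ι) (z : ι → ℝ)
    (F : ι → ℝ → ℝ) (hF_nonneg : ∀ i ∈ s, ∀ t, 0 ≤ t → 0 ≤ F i t)
    (hF_pos : ∀ i ∈ s, ∀ t, 0 < t → 0 < F i t) {j : ι} (hj : ∀ i ∈ s, z i ≤ z j)
    (hsum : ∑ i ∈ s, F i (z j - z i) = 0) {i : ι} (hi : i ∈ s) : z i = z j := by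
  have hterm_nonneg : ∀ k ∈ s, 0 ≤ F k (z j - z k) :=
    fun k hk => hF_nonneg k hk _ (sub_nonneg.mpr (hj k hk))
  have hterm_zero : F i (z j - z i) = 0 := (sum_eq_zero_iff_of_nonneg hterm_nonneg).mp hsum i hi
  by_contra hne
  have hlt : 0 < z j - z i := sub_pos.mpr (lt_of_le_of_ne (hj i hi) hne)
  exact (hF_pos i hi _ hlt).ne' hterm_zero

theorem mul_div_sqrt_add_sq_pow_three_pos {k a t : ℝ} (hk : 0 < k) (ha : 0 ≤ a) (ht : 0 < t) :
    0 < k * t / Real.sqrt (a + t ^ 2) ^ 3 := by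
  have : 0 < a + t ^ 2 := by positivity
  positivity

theorem relative_equilibria_are_planar_general
    (n : ℕ) (m : Fin (n + 1) → ℝ) (hm : ∀ j, 0 < m j)
    (u : Fin (n + 1) → ℂ) (z : Fin (n + 1) → ℝ)
    (heq : ∀ j : Fin (n + 1),
      ∑ i ∈ Finset.univ.erase j,
        m i * m j * (z j - z i) /
          (Real.sqrt (‖u j - u i‖ ^ 2 + (z j - z i) ^ 2)) ^ 3 = 0) :
    ∀ i j : Fin (n + 1), z i = z j := by
  obtain ⟨j, -, hjmax⟩ := exists_max_image univ z univ_nonempty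
  have hconst : ∀ i, z i = z j := by
    intro i
    rcases eq_or_ne i j with rfl | hij
    · rfl
    refine eq_of_forall_le_of_sum_eq_zero (univ.erase j) z
      (fun i t => m i * m j * t / Real.sqrt (‖u j - u i‖ ^ 2 + t ^ 2) ^ 3)
      (fun i _ t ht => ?_) (fun i _ t ht => ?_) (fun i _ => hjmax i (mem_univ i)) (heq j)
      (mem_erase.mpr ⟨hij, mem_univ i⟩)
    · have := hm i
      have := hm j
      positivity
    · exact mul_div_sqrt_add_sq_pow_three_pos (mul_pos (hm i) (hm j)) (sq_nonneg _) ht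
  intro a b
  rw [hconst a, hconst b]

/-- Every relative equilibrium of the `(n+1)`-body problem is planar:
if the points `xⱼ = (uⱼ, zⱼ) ∈ ℂ × ℝ` are pairwise distinct and the vertical equations
`∑_{i ≠ j} mᵢ mⱼ (zⱼ - zᵢ)/‖xⱼ - xᵢ‖³ = 0` hold for every `j`, then all the `zⱼ`
coincide. -/
theorem relative_equilibria_are_planar
    (n : ℕ) (hn : 1 ≤ n) (m : Fin (n + 1) → ℝ) (hm : ∀ j, 0 < m j)
    (u : Fin (n + 1) → ℂ) (z : Fin (n + 1) → ℝ)
    (hdist : ∀ i j : Fin (n + 1), i ≠ j → (u i, z i) ≠ (u j, z j))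
    (heq : ∀ j : Fin (n + 1),
      ∑ i ∈ Finset.univ.erase j,
        m i * m j * (z j - z i) /
          (Real.sqrt (‖u j - u i‖ ^ 2 + (z j - z i) ^ 2)) ^ 3 = 0) :
    ∀ i j : Fin (n + 1), z i = z j :=
  relative_equilibria_are_planar_general n m hm u z heq
end

section
/- Fix n ≥ 1, ζ = 2π/n, an integer k, and reals ω > 0 and ν > 0. Let u₁,…,uₙ : ℝ → ℂ satisfy u_{1+j}(t) = e^{ijζ}·u₁(t + jkζ) for all t and all j ∈ {0,…,n−1}, and define qⱼ(t) = e^{i√ω·t}·uⱼ(ν·t). Then for all j ∈ {0,…,n−1} and all t: q_{1+j}(t) = e^{ijζΩ}·q₁(t + jkζ/ν), where Ω = 1 − k√ω/ν. In particular, if Ω ∈ nℤ then q_{1+j}(t) = q₁(t + jkζ/ν) for all j, i.e., all n bodies follow the same curve with equal phase shifts (a choreography). -/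
/-- If, in rotating coordinates, the `n` equal-mass bodies satisfy the
`Z̃ₙ(k)`-symmetry `u_{1+j}(t) = e^{ijζ} u₁(t + jkζ)`, then in the fixed frame the
trajectories `qⱼ(t) = e^{i√ω t} uⱼ(νt)` satisfy
`q_{1+j}(t) = e^{ijζΩ} q₁(t + jkζ/ν)` with `Ω = 1 - k√ω/ν`; in particular, if `Ω ∈ nℤ`
all bodies follow the same curve with equal phase shifts (a choreography). -/
theorem symmetric_solutions_are_choreographies
    (n : ℕ) (hn : 1 ≤ n) (ζ : ℝ) (hζ : ζ = 2 * Real.pi / n) (k : ℤ)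
    (ω ν : ℝ) (hω : 0 < ω) (hν : 0 < ν)
    (u : ℕ → ℝ → ℂ)
    (hsym : ∀ j < n, ∀ t : ℝ,
      u (1 + j) t = Complex.exp (Complex.I * (j : ℂ) * (ζ : ℂ)) * u 1 (t + j * k * ζ))
    (q : ℕ → ℝ → ℂ)
    (hq : ∀ j, ∀ t : ℝ,
      q j t = Complex.exp (Complex.I * ((Real.sqrt ω : ℝ) : ℂ) * (t : ℂ)) * u j (ν * t))
    (Ω : ℝ) (hΩ : Ω = 1 - k * Real.sqrt ω / ν) :
    (∀ j < n, ∀ t : ℝ,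
      q (1 + j) t = Complex.exp (Complex.I * (j : ℂ) * (ζ : ℂ) * (Ω : ℂ)) *
        q 1 (t + j * k * ζ / ν)) ∧
    ((∃ l : ℤ, Ω = n * l) →
      ∀ j < n, ∀ t : ℝ, q (1 + j) t = q 1 (t + j * k * ζ / ν)) := by
  have hν' : (ν:ℂ) ≠ 0 := by exact_mod_cast hν.ne'
  have hn' : (n:ℝ) ≠ 0 := by positivity
  have hnC : (n:ℂ) ≠ 0 := by exact_mod_cast hn'
  have main : ∀ j < n, ∀ t : ℝ,
      q (1 + j) t = Complex.exp (Complex.I * (j : ℂ) * (ζ : ℂ) * (Ω : ℂ)) *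
        q 1 (t + j * k * ζ / ν) := by
    intro j hj t
    rw [hq, hq, hsym j hj, ← mul_assoc, ← Complex.exp_add, ← mul_assoc,
      ← Complex.exp_add]
    have harg : ν * t + ↑j * ↑k * ζ = ν * (t + ↑j * ↑k * ζ / ν) := by
      field_simp
    rw [harg]
    congr 2
    subst hΩ
    push_cast
    field_simp
    ring
  refine ⟨main, ?_⟩
  rintro ⟨l, hl⟩ j hj t
  rw [main j hj t, hl]
  have : Complex.I * (j:ℂ) * (ζ:ℂ) * ((n:ℝ) * (l:ℤ) : ℝ) =
      ((j:ℤ)*l : ℤ) * (2 * Real.pi * Complex.I) := by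
    rw [hζ]
    push_cast
    field_simp [hnC]
  rw [this, Complex.exp_int_mul_two_pi_mul_I, one_mul]
end

section
/- Let n = 2m with m ≥ 1 and ζ = 2π/n, and let uⱼ : ℝ → ℂ and zⱼ : ℝ → ℝ for j ∈ {0,1,…,n}. Suppose for all t: (i) for j ∈ {1,…,n} (with u_{n+1} := u₁, z_{n+1} := z₁), uⱼ(t) = e^{−iζ}·u_{j+1}(t − π) and zⱼ(t) = z_{j+1}(t − π); (ii) u₀(t) = e^{−iζ}·u₀(t − π) and z₀(t) = z₀(t − π); (iii) for all j ∈ {0,…,n}, uⱼ(t) = uⱼ(t + π) and zⱼ(t) = −zⱼ(t + π). Then u₀ ≡ 0 and z₀ ≡ 0 (the central body stays at the center), and for all j ∈ {0,…,n−1} and all t: u_{1+j}(t) = e^{ijζ}·u₁(t) and z_{1+j}(t) = (−1)^j·z₁(t). Hence the n bodies form two regular m-gons oscillating vertically in opposition (Hip-Hop configuration). -/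
/-- **Hip-Hop configuration.** For `n = 2m` bodies plus a central body,
the symmetries of `Z̃ₙ(m) × Z̃₂` (note `mζ = π` for `ζ = 2π/n`) force the central body to
stay at the center and the `n` bodies to form two regular `m`-gons oscillating vertically
in opposition: `u_{1+j}(t) = e^{ijζ} u₁(t)` and `z_{1+j}(t) = (-1)^j z₁(t)`. -/
theorem hip_hop_symmetries
    (m : ℕ) (hm : 1 ≤ m) (n : ℕ) (hn : n = 2 * m)
    (ζ : ℝ) (hζ : ζ = 2 * Real.pi / n)
    (u : ℕ → ℝ → ℂ) (z : ℕ → ℝ → ℝ)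
    (hring_u : ∀ j, 1 ≤ j → j ≤ n → ∀ t : ℝ,
      u j t = Complex.exp (-(Complex.I * (ζ : ℂ))) *
        u (if j = n then 1 else j + 1) (t - Real.pi))
    (hring_z : ∀ j, 1 ≤ j → j ≤ n → ∀ t : ℝ,
      z j t = z (if j = n then 1 else j + 1) (t - Real.pi))
    (hcenter_u : ∀ t : ℝ, u 0 t = Complex.exp (-(Complex.I * (ζ : ℂ))) * u 0 (t - Real.pi))
    (hcenter_z : ∀ t : ℝ, z 0 t = z 0 (t - Real.pi))
    (height_u : ∀ j ≤ n, ∀ t : ℝ, u j t = u j (t + Real.pi))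
    (height_z : ∀ j ≤ n, ∀ t : ℝ, z j t = -z j (t + Real.pi)) :
    (∀ t : ℝ, u 0 t = 0) ∧ (∀ t : ℝ, z 0 t = 0) ∧
      (∀ j < n, ∀ t : ℝ,
        u (1 + j) t = Complex.exp (Complex.I * (j : ℂ) * (ζ : ℂ)) * u 1 t ∧
          z (1 + j) t = (-1 : ℝ) ^ j * z 1 t) := by
  have hn2 : 2 ≤ n := by omega
  have hnpos : (0:ℝ) < n := by positivity
  have hζpos : 0 < ζ := by
    rw [hζ]; positivity
  have hζle : ζ ≤ Real.pi := by
    rw [hζ, div_le_iff₀ hnpos]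
    have : (2:ℝ) ≤ n := by exact_mod_cast hn2
    nlinarith [Real.pi_pos]
  -- the rotation factor is not 1
  have hE : Complex.exp (-(Complex.I * (ζ : ℂ))) ≠ 1 := by
    intro h
    rw [Complex.exp_eq_one_iff] at h
    obtain ⟨k, hk⟩ := h
    have : -(ζ:ℂ) = k * (2 * Real.pi) := by
      have := hk
      rw [show ((k:ℂ) * (2 * Real.pi * Complex.I)) = ((k:ℂ) * (2 * Real.pi)) * Complex.I by ring,
        show (-(Complex.I * (ζ:ℂ))) = (-(ζ:ℂ)) * Complex.I by ring] at this
      exact mul_right_cancel₀ Complex.I_ne_zero this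
    have hr : -ζ = (k:ℝ) * (2 * Real.pi) := by exact_mod_cast this
    have hkneg : (k:ℝ) < 0 := by
      by_contra hk0
      push_neg at hk0
      nlinarith [Real.pi_pos]
    have hk1 : k ≤ -1 := by
      have : k < 0 := by exact_mod_cast hkneg
      omega
    have : (k:ℝ) ≤ -1 := by exact_mod_cast hk1
    nlinarith [Real.pi_pos]
  -- u 0 vanishes
  have hu0 : ∀ t : ℝ, u 0 t = 0 := by
    intro t
    have h1 := hcenter_u t
    have h2 := height_u 0 (by omega) (t - Real.pi)
    rw [sub_add_cancel] at h2
    rw [h2] at h1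
    have : (1 - Complex.exp (-(Complex.I * (ζ : ℂ)))) * u 0 t = 0 := by
      rw [sub_mul, one_mul]; rw [← h1]; ring
    rcases mul_eq_zero.mp this with h | h
    · exact absurd (by linear_combination -h : Complex.exp (-(Complex.I * (ζ:ℂ))) = 1) hE
    · exact h
  have hz0 : ∀ t : ℝ, z 0 t = 0 := by
    intro t
    have h1 := hcenter_z t
    have h2 := height_z 0 (by omega) (t - Real.pi)
    rw [sub_add_cancel] at h2
    rw [h2] at h1
    linarith
  refine ⟨hu0, hz0, ?_⟩
  -- main induction
  have key : ∀ j, 1 + j ≤ n → ∀ t : ℝ,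
      u (1 + j) t = Complex.exp (Complex.I * (j : ℂ) * (ζ : ℂ)) * u 1 t ∧
        z (1 + j) t = (-1 : ℝ) ^ j * z 1 t := by
    intro j
    induction j with
    | zero =>
      intro _ t
      simp
    | succ j ih =>
      intro hj t
      have hj' : 1 + j ≤ n := by omega
      have hne : 1 + j ≠ n := by omega
      obtain ⟨ihu, ihz⟩ := ih hj' t
      have hu := hring_u (1 + j) (by omega) hj' t
      have hz := hring_z (1 + j) (by omega) hj' t
      rw [if_neg hne] at hu hz
      have hsu : u (1 + j + 1) (t - Real.pi) = u (1 + j + 1) t := by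
        have := height_u (1 + j + 1) (by omega) (t - Real.pi)
        rwa [sub_add_cancel] at this
      have hsz : z (1 + j + 1) (t - Real.pi) = -z (1 + j + 1) t := by
        have := height_z (1 + j + 1) (by omega) (t - Real.pi)
        rwa [sub_add_cancel] at this
      rw [hsu] at hu
      rw [hsz] at hz
      constructor
      · have heq : Complex.exp (-(Complex.I * (ζ:ℂ))) * u (1 + j + 1) t
            = Complex.exp (Complex.I * (j : ℂ) * (ζ : ℂ)) * u 1 t := by
          rw [← hu, ihu]
        have : u (1 + j + 1) t
            = Complex.exp (Complex.I * (ζ:ℂ)) * (Complex.exp (Complex.I * (j : ℂ) * (ζ : ℂ)) * u 1 t) := by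
          have hinv : Complex.exp (Complex.I * (ζ:ℂ)) * Complex.exp (-(Complex.I * (ζ:ℂ))) = 1 := by
            rw [← Complex.exp_add]; simp
          calc u (1 + j + 1) t
              = (Complex.exp (Complex.I * (ζ:ℂ)) * Complex.exp (-(Complex.I * (ζ:ℂ)))) * u (1 + j + 1) t := by
                rw [hinv, one_mul]
            _ = Complex.exp (Complex.I * (ζ:ℂ)) * (Complex.exp (-(Complex.I * (ζ:ℂ))) * u (1 + j + 1) t) := by ring
            _ = _ := by rw [heq]
        rw [show (1 + (j + 1)) = (1 + j + 1) by ring, this, ← mul_assoc, ← Complex.exp_add]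
        push_cast
        ring_nf
      · have : -z (1 + j + 1) t = (-1:ℝ)^j * z 1 t := by rw [← hz, ihz]
        rw [show (1 + (j + 1)) = (1 + j + 1) by ring]
        rw [pow_succ]
        linarith [this]
  intro j hj t
  exact key j (by omega) t
end
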